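/- Let (X_i, Y_i), i ∈ [k], be i.i.d. pairs of finite discrete random variables and let M be any random variable that is a deterministic function of X^k = (X_1,...,X_k). Then I(X^k; M | Y^k) = Σ_{i=1}^k I(X_i; (M, X^{i−1}, Y^{[k]∖{i}}) | Y_i). -/

import Mathlib

/-!
Since `M` is a function of `X^k`, the left side is `H(M, Y^k) - H(Y^k)`. With
`E n = H(M, X^{<n}, Y^k)`, the `i`-th summand is `H(X_i | Y_i) + E i - E (i + 1)`, because
`(M, X^{<i}, Y^{[k]∖{i}})` together with `Y_i` is a relabelling of `(M, X^{<i}, Y^k)`, and adding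
`X_i` gives `(M, X^{≤i}, Y^k)`. The `E`'s telescope to `E 0 - E k = H(M, Y^k) - H(X^k, Y^k)`, and
independence of the pairs makes `H(X^k, Y^k)` and `H(Y^k)` additive, so that
`∑ i, H(X_i | Y_i) = H(X^k, Y^k) - H(Y^k)`.
-/

open scoped BigOperators

namespace Caching

/-- A finitely supported probability mass function on the sample space `Ω`. -/
structure FinPMF (Ω : Type*) [Fintype Ω] where
  p : Ω → ℝ
  nonneg : ∀ ω, 0 ≤ p ω
  sum_one : ∑ ω, p ω = 1

variable {Ω : Type*} [Fintype Ω]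

/-- The probability that the random variable `X` takes the value `x`. -/
def prob {α : Type*} [DecidableEq α] (μ : FinPMF Ω) (X : Ω → α) (x : α) : ℝ :=
  ∑ ω, if X ω = x then μ.p ω else 0

/-- Shannon entropy (in bits) of a finite discrete random variable. -/
noncomputable def H {α : Type*} [Fintype α] [DecidableEq α] (μ : FinPMF Ω) (X : Ω → α) : ℝ :=
  -∑ x, prob μ X x * Real.logb 2 (prob μ X x)

/-- Conditional entropy `H(X | Y)` (in bits). -/
noncomputable def condH {α β : Type*} [Fintype α] [DecidableEq α] [Fintype β] [DecidableEq β]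
    (μ : FinPMF Ω) (X : Ω → α) (Y : Ω → β) : ℝ :=
  H μ (fun ω => (X ω, Y ω)) - H μ Y

/-- Mutual information `I(X; Y)` (in bits). -/
noncomputable def mutInfo {α β : Type*} [Fintype α] [DecidableEq α] [Fintype β] [DecidableEq β]
    (μ : FinPMF Ω) (X : Ω → α) (Y : Ω → β) : ℝ :=
  H μ X + H μ Y - H μ (fun ω => (X ω, Y ω))

/-- Conditional mutual information `I(X; Y | Z)` (in bits). -/
noncomputable def condMutInfo {α β γ : Type*} [Fintype α] [DecidableEq α] [Fintype β]
    [DecidableEq β] [Fintype γ] [DecidableEq γ]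
    (μ : FinPMF Ω) (X : Ω → α) (Y : Ω → β) (Z : Ω → γ) : ℝ :=
  condH μ X Z + condH μ Y Z - condH μ (fun ω => (X ω, Y ω)) Z

/-- `X` and `Y` are independent. -/
def Indep {α β : Type*} [DecidableEq α] [DecidableEq β]
    (μ : FinPMF Ω) (X : Ω → α) (Y : Ω → β) : Prop :=
  ∀ x y, prob μ (fun ω => (X ω, Y ω)) (x, y) = prob μ X x * prob μ Y y

/-- `V — X — Y` form a Markov chain: `V` and `Y` are conditionally independent given `X`. -/
def MarkovChain {α β γ : Type*} [DecidableEq α] [DecidableEq β] [DecidableEq γ]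
    (μ : FinPMF Ω) (V : Ω → γ) (X : Ω → α) (Y : Ω → β) : Prop :=
  ∀ v x y, prob μ (fun ω => (V ω, X ω, Y ω)) (v, x, y) * prob μ X x
    = prob μ (fun ω => (V ω, X ω)) (v, x) * prob μ (fun ω => (X ω, Y ω)) (x, y)

lemma Fin.sum_castSucc_sub_succ {G : Type*} [AddCommGroup G] {n : ℕ} (f : Fin (n + 1) → G) :
    ∑ i : Fin n, (f i.castSucc - f i.succ) = f 0 - f (Fin.last n) := by
  induction n with
  | zero => simp
  | succ n ih =>
    rw [Fin.sum_univ_castSucc]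
    simp only [Fin.succ_castSucc]
    rw [ih fun i => f i.castSucc, Fin.castSucc_zero, Fin.succ_last]
    abel

lemma prod_mul_logb_prod {ι : Type*} (s : Finset ι) (b : ℝ) (a : ι → ℝ) :
    (∏ i ∈ s, a i) * Real.logb b (∏ i ∈ s, a i) = ∑ i ∈ s, (∏ j ∈ s, a j) * Real.logb b (a i) := by
  by_cases ha : ∀ i ∈ s, a i ≠ 0
  · rw [Real.logb_prod s a ha, Finset.mul_sum]
  · push Not at ha
    obtain ⟨i, hi, hai⟩ := ha
    simp [Finset.prod_eq_zero hi hai]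

lemma sum_pi_prod_mul_apply {ι ζ : Type*} [Fintype ι] [DecidableEq ι] [Fintype ζ]
    (p : ι → ζ → ℝ) (hp : ∀ j, ∑ z, p j z = 1) (i : ι) (g : ζ → ℝ) :
    ∑ w : ι → ζ, (∏ j, p j (w j)) * g (w i) = ∑ z, p i z * g z := by
  set q := Function.update p i fun z => p i z * g z
  have hq : ∀ j ∈ ({i}ᶜ : Finset ι), q j = p j := fun j hj =>
    Function.update_of_ne (by simpa using hj) _ _
  calc ∑ w : ι → ζ, (∏ j, p j (w j)) * g (w i)
      = ∑ w : ι → ζ, ∏ j, q j (w j) := by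
        refine Finset.sum_congr rfl fun w _ => ?_
        rw [Fintype.prod_eq_mul_prod_compl i, Fintype.prod_eq_mul_prod_compl i,
          Finset.prod_congr rfl fun j hj => congrFun (hq j hj) (w j)]
        simp only [q, Function.update_self]
        ring
    _ = ∏ j, ∑ z, q j z := (Fintype.prod_sum _).symm
    _ = ∑ z, p i z * g z := by
        rw [Fintype.prod_eq_mul_prod_compl i,
          Finset.prod_eq_one fun j hj => by rw [hq j hj, hp j]]
        simp [q]

lemma sum_prob {α : Type*} [Fintype α] [DecidableEq α] (μ : FinPMF Ω) (X : Ω → α) :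
    ∑ x, prob μ X x = 1 := by
  simp only [prob]
  rw [Finset.sum_comm]
  simp [μ.sum_one]

lemma prob_comp_eq_sum {α β : Type*} [Fintype α] [DecidableEq α] [DecidableEq β]
    (μ : FinPMF Ω) (T : Ω → α) (f : α → β) (b : β) :
    prob μ (fun ω => f (T ω)) b = ∑ a, if f a = b then prob μ T a else 0 := by
  simp only [prob, Finset.ite_sum_zero]
  rw [Finset.sum_comm]
  refine Finset.sum_congr rfl fun ω _ => ?_
  rw [Fintype.sum_eq_single (T ω) fun a ha => by simp [Ne.symm ha], if_pos rfl]

lemma prob_comp_of_injective {α β : Type*} [DecidableEq α] [DecidableEq β]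
    (μ : FinPMF Ω) (T : Ω → α) {f : α → β} (hf : Function.Injective f) (a : α) :
    prob μ (fun ω => f (T ω)) (f a) = prob μ T a := by
  simp only [prob, hf.eq_iff]

lemma H_comp_of_injective {α β : Type*} [Fintype α] [DecidableEq α] [Fintype β] [DecidableEq β]
    (μ : FinPMF Ω) (T : Ω → α) {f : α → β} (hf : Function.Injective f) :
    H μ (fun ω => f (T ω)) = H μ T := by
  rw [H, H, Fintype.sum_of_injective f hf]
  · intro b hb
    rw [prob_comp_eq_sum, Finset.sum_eq_zero fun a _ => if_neg fun h => hb ⟨a, h⟩]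
    simp
  · intro a
    rw [prob_comp_of_injective μ T hf]

lemma condMutInfo_comp_eq_condH {α γ ζ : Type*} [Fintype α] [DecidableEq α] [Fintype γ]
    [DecidableEq γ] [Fintype ζ] [DecidableEq ζ]
    (μ : FinPMF Ω) (X : Ω → α) (g : α → γ) (Z : Ω → ζ) :
    condMutInfo μ X (fun ω => g (X ω)) Z = condH μ (fun ω => g (X ω)) Z := by
  have hf : Function.Injective fun q : α × ζ => ((q.1, g q.1), q.2) := by
    rintro ⟨x, z⟩ ⟨x', z'⟩ h
    simp only [Prod.mk.injEq] at h
    obtain ⟨⟨rfl, -⟩, rfl⟩ := h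
    rfl
  have hXZ := H_comp_of_injective μ (fun ω => (X ω, Z ω)) hf
  rw [condMutInfo, condH, condH, condH, hXZ]
  ring

def iIndep {ι α : Type*} [Fintype ι] [DecidableEq α] (μ : FinPMF Ω) (W : ι → Ω → α) : Prop :=
  ∀ w : ι → α, prob μ (fun ω i => W i ω) w = ∏ i, prob μ (W i) (w i)

lemma iIndep.comp {ι α β : Type*} [Fintype ι] [DecidableEq ι] [Fintype α] [DecidableEq α]
    [DecidableEq β] {μ : FinPMF Ω} {W : ι → Ω → α} (hW : iIndep μ W) (f : ι → α → β) :
    iIndep μ (fun i ω => f i (W i ω)) := by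
  intro v
  rw [prob_comp_eq_sum μ (fun ω i => W i ω) (fun w i => f i (w i)) v,
    Finset.prod_congr rfl fun i _ => prob_comp_eq_sum μ (W i) (f i) (v i), Fintype.prod_sum]
  refine Finset.sum_congr rfl fun w _ => ?_
  simp only [hW w, Fintype.prod_ite_zero, funext_iff]

lemma iIndep_pair_of_prob_eq_prod {ι α β : Type*} [Fintype ι] [DecidableEq α] [DecidableEq β]
    {μ : FinPMF Ω} {X : ι → Ω → α} {Y : ι → Ω → β}
    (h : ∀ (x : ι → α) (y : ι → β),
      prob μ (fun ω => (fun i => X i ω, fun i => Y i ω)) (x, y)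
        = ∏ i, prob μ (fun ω => (X i ω, Y i ω)) (x i, y i)) :
    iIndep μ (fun i ω => (X i ω, Y i ω)) := by
  intro w
  let e := Equiv.arrowProdEquivProdArrow ι (fun _ => α) (fun _ => β)
  calc prob μ (fun ω i => (X i ω, Y i ω)) w
      = prob μ (fun ω => e.symm (fun i => X i ω, fun i => Y i ω)) (e.symm (e w)) := by
        rw [e.symm_apply_apply]
        rfl
    _ = ∏ i, prob μ (fun ω => (X i ω, Y i ω)) (w i) := by
        rw [prob_comp_of_injective μ _ e.symm.injective, h]
        rfl

lemma H_pi_of_iIndep {ι α : Type*} [Fintype ι] [DecidableEq ι] [Fintype α] [DecidableEq α]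
    {μ : FinPMF Ω} {W : ι → Ω → α} (hW : iIndep μ W) :
    H μ (fun ω i => W i ω) = ∑ i, H μ (W i) := by
  rw [iIndep] at hW
  calc H μ (fun ω i => W i ω)
      = -∑ i, ∑ w : ι → α, (∏ j, prob μ (W j) (w j)) * Real.logb 2 (prob μ (W i) (w i)) := by
        simp only [H, hW, prod_mul_logb_prod]
        rw [Finset.sum_comm]
    _ = ∑ i, H μ (W i) := by
        rw [Finset.sum_congr rfl fun i _ => sum_pi_prod_mul_apply (fun j => prob μ (W j))
          (fun j => sum_prob μ (W j)) i fun z => Real.logb 2 (prob μ (W i) z)]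
        simp only [H, Finset.sum_neg_distrib]

section Prefix

variable {α β γ : Type*} [Fintype α] [DecidableEq α] [Fintype β] [DecidableEq β]
  [Fintype γ] [DecidableEq γ] {k : ℕ} (μ : FinPMF Ω) (M : Ω → γ) (X : Fin k → Ω → α)
  (Y : Fin k → Ω → β)

noncomputable def prefixEntropy (n : Fin (k + 1)) : ℝ :=
  H μ (fun ω => (M ω, fun j : Fin n => X (Fin.castLE n.is_le j) ω, fun j => Y j ω))

lemma prefixEntropy_zero : prefixEntropy μ M X Y 0 = H μ (fun ω => (M ω, fun j => Y j ω)) := by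
  have hf : Function.Injective
      fun q : γ × (Fin (0 : Fin (k + 1)) → α) × (Fin k → β) => (q.1, q.2.2) := by
    rintro ⟨m, x, y⟩ ⟨m', x', y'⟩ h
    simp only [Prod.mk.injEq] at h
    simp only [h, Prod.mk.injEq, true_and, and_true]
    exact funext fun j => absurd j.isLt (by simp)
  exact (H_comp_of_injective μ _ hf).symm

lemma prefixEntropy_last (g : (Fin k → α) → γ) :
    prefixEntropy μ (fun ω => g fun i => X i ω) X Y (Fin.last k)
      = H μ (fun ω => (fun i => X i ω, fun i => Y i ω)) := by
  have hf : Function.Injective fun q : (Fin k → α) × (Fin k → β) => (g q.1, q.1, q.2) :=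
    fun q q' h => Prod.ext (congrArg (·.2.1) h) (congrArg (·.2.2) h)
  exact H_comp_of_injective μ (fun ω => (fun i => X i ω, fun i => Y i ω)) hf

-- The `DecidableEq` instance of the conditioning tuple is larger than the default search allows.
set_option synthInstance.maxSize 512 in
lemma prefixEntropy_castSucc (i : Fin k) :
    prefixEntropy μ M X Y i.castSucc
      = H μ (fun ω => ((M ω,
          fun j : Fin i.val => X ⟨j.val, Nat.lt_of_lt_of_le j.isLt (Nat.le_of_lt i.isLt)⟩ ω,
          fun j : {j : Fin k // j ≠ i} => Y j.val ω), Y i ω)) := by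
  have hf : Function.Injective fun q : γ × (Fin i.castSucc → α) × (Fin k → β) =>
      ((q.1, q.2.1, fun j : {j : Fin k // j ≠ i} => q.2.2 j), q.2.2 i) := by
    rintro ⟨m, x, y⟩ ⟨m', x', y'⟩ h
    simp only [Prod.mk.injEq] at h
    obtain ⟨⟨rfl, rfl, hy⟩, hi⟩ := h
    simp only [Prod.mk.injEq, true_and]
    exact (Equiv.piSplitAt i _).injective (Prod.ext hi hy)
  exact (H_comp_of_injective μ
    (fun ω => (M ω, fun j : Fin i.castSucc => X (Fin.castLE (Fin.is_le _) j) ω, fun j => Y j ω))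
    hf).symm

set_option synthInstance.maxSize 512 in
lemma prefixEntropy_succ (i : Fin k) :
    prefixEntropy μ M X Y i.succ
      = H μ (fun ω => ((X i ω, (M ω,
          fun j : Fin i.val => X ⟨j.val, Nat.lt_of_lt_of_le j.isLt (Nat.le_of_lt i.isLt)⟩ ω,
          fun j : {j : Fin k // j ≠ i} => Y j.val ω)), Y i ω)) := by
  have hf : Function.Injective fun q : γ × (Fin (i.val + 1) → α) × (Fin k → β) =>
      ((q.2.1 (Fin.last i), (q.1, Fin.init q.2.1, fun j : {j : Fin k // j ≠ i} => q.2.2 j)),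
        q.2.2 i) := by
    rintro ⟨m, x, y⟩ ⟨m', x', y'⟩ h
    simp only [Prod.mk.injEq] at h
    obtain ⟨⟨hlast, rfl, hinit, hy⟩, hi⟩ := h
    simp only [Prod.mk.injEq, true_and]
    refine ⟨?_, (Equiv.piSplitAt i _).injective (Prod.ext hi hy)⟩
    rw [← Fin.snoc_init_self x, ← Fin.snoc_init_self x', hinit, hlast]
  exact (H_comp_of_injective μ
    (fun ω => (M ω, fun j : Fin (i.val + 1) => X (Fin.castLE i.succ.is_le j) ω, fun j => Y j ω))
    hf).symm

lemma condMutInfo_eq_condH_add_prefixEntropy_sub (i : Fin k) :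
    condMutInfo μ (X i)
      (fun ω => (M ω,
        fun j : Fin i.val => X ⟨j.val, Nat.lt_of_lt_of_le j.isLt (Nat.le_of_lt i.isLt)⟩ ω,
        fun j : {j : Fin k // j ≠ i} => Y j.val ω))
      (Y i)
      = condH μ (X i) (Y i) + (prefixEntropy μ M X Y i.castSucc - prefixEntropy μ M X Y i.succ) := by
  simp only [condMutInfo, condH, prefixEntropy_castSucc, prefixEntropy_succ]
  ring

end Prefix

theorem single_letterization_general
    {Ω α β γ : Type*} [Fintype Ω] [Fintype α] [DecidableEq α] [Fintype β] [DecidableEq β]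
    [Fintype γ] [DecidableEq γ] {k : ℕ}
    (μ : FinPMF Ω) (X : Fin k → Ω → α) (Y : Fin k → Ω → β) (M : Ω → γ)
    (hiid_indep : ∀ (x : Fin k → α) (y : Fin k → β),
      prob μ (fun ω => (fun i => X i ω, fun i => Y i ω)) (x, y)
        = ∏ i, prob μ (fun ω => (X i ω, Y i ω)) (x i, y i))
    (hM : ∃ g : (Fin k → α) → γ, ∀ ω, M ω = g (fun i => X i ω)) :
    condMutInfo μ (fun ω => fun i => X i ω) M (fun ω => fun i => Y i ω)
      = ∑ i : Fin k,
          condMutInfo μ (X i)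
            (fun ω => (M ω,
              fun j : Fin i.val => X ⟨j.val, Nat.lt_of_lt_of_le j.isLt (Nat.le_of_lt i.isLt)⟩ ω,
              fun j : {j : Fin k // j ≠ i} => Y j.val ω))
            (Y i) := by
  obtain ⟨g, rfl⟩ : ∃ g : (Fin k → α) → γ, M = fun ω => g fun i => X i ω :=
    hM.imp fun g hg => funext hg
  have hpairs := iIndep_pair_of_prob_eq_prod hiid_indep
  have hXY : H μ (fun ω => (fun i => X i ω, fun i => Y i ω))
      = ∑ i, H μ (fun ω => (X i ω, Y i ω)) :=
    (H_comp_of_injective μ _ (Equiv.arrowProdEquivProdArrow _ _ _).symm.injective).symm.trans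
      (H_pi_of_iIndep hpairs)
  have hY : H μ (fun ω i => Y i ω) = ∑ i, H μ (Y i) :=
    H_pi_of_iIndep (hpairs.comp fun _ => Prod.snd)
  rw [condMutInfo_comp_eq_condH, Finset.sum_congr rfl fun i _ =>
      condMutInfo_eq_condH_add_prefixEntropy_sub μ _ X Y i, Finset.sum_add_distrib,
    Fin.sum_castSucc_sub_succ, prefixEntropy_zero, prefixEntropy_last]
  simp only [condH, Finset.sum_sub_distrib, ← hXY, ← hY]
  ring

/-- Single-letterization: for i.i.d. pairs `(X_i, Y_i)` and any `M` that is a deterministic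
function of `X^k`,
`I(X^k; M | Y^k) = Σ_i I(X_i; (M, X^{i−1}, Y^{[k]∖{i}}) | Y_i)`. -/
theorem single_letterization
    {Ω α β γ : Type*} [Fintype Ω] [Fintype α] [DecidableEq α] [Fintype β] [DecidableEq β]
    [Fintype γ] [DecidableEq γ] {k : ℕ}
    (μ : FinPMF Ω) (X : Fin k → Ω → α) (Y : Fin k → Ω → β) (M : Ω → γ)
    (hiid_indep : ∀ (x : Fin k → α) (y : Fin k → β),
      prob μ (fun ω => (fun i => X i ω, fun i => Y i ω)) (x, y)
        = ∏ i, prob μ (fun ω => (X i ω, Y i ω)) (x i, y i))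
    (hiid_ident : ∀ (i j : Fin k) (a : α) (b : β),
      prob μ (fun ω => (X i ω, Y i ω)) (a, b) = prob μ (fun ω => (X j ω, Y j ω)) (a, b))
    (hM : ∃ g : (Fin k → α) → γ, ∀ ω, M ω = g (fun i => X i ω)) :
    condMutInfo μ (fun ω => fun i => X i ω) M (fun ω => fun i => Y i ω)
      = ∑ i : Fin k,
          condMutInfo μ (X i)
            (fun ω => (M ω,
              fun j : Fin i.val => X ⟨j.val, Nat.lt_of_lt_of_le j.isLt (Nat.le_of_lt i.isLt)⟩ ω,
              fun j : {j : Fin k // j ≠ i} => Y j.val ω))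
            (Y i) :=
  single_letterization_general μ X Y M hiid_indep hM

end Caching
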